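/- arXiv:2306.03994 — 3 statements merged into one kernel-verified Lean document; each statement's English description precedes it below -/
import Mathlib

section
/- Every graph G on n ≥ 4 vertices with minimum degree at least (n+1)/2 is Hamiltonian path-connected, i.e., for every pair of distinct vertices x, y there is a Hamiltonian path in G with endpoints x and y. -/
/-!
Add a new vertex `none` joined to `x` and `y`: Hamiltonian `x`–`y` paths of `G` are exactly what
remains of Hamiltonian cycles of `G.addVertex x y` after deleting `none`. The complete graph on `V`
with the new vertex attached is clearly Hamiltonian, and we delete the missing edges of `G` one at
a time. Each of them joins two old vertices whose degrees sum to at least `n + 1`, the order of the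
extended graph, so Pósa's rotation applies: if a Hamiltonian cycle uses the edge `ab`, the rest of
the cycle is a Hamiltonian path `b = v₀, …, vₘ = a`, and by pigeonhole there is an `i` with
`vᵢ ~ a` and `vᵢ₊₁ ~ b`, so `v₀ … vᵢ vₘ vₘ₋₁ … vᵢ₊₁` is a Hamiltonian cycle avoiding `ab`.
-/

open Finset

theorem Finset.exists_succ_mem_and_mem_of_card_lt {A B : Finset ℕ} {m : ℕ}
    (hA : A ⊆ Icc 1 m) (hB : B ⊆ range m) (h : m < #A + #B) : ∃ i, i + 1 ∈ A ∧ i ∈ B := by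
  have hpos : ∀ a ∈ A, 1 ≤ a := fun a ha => (mem_Icc.1 (hA ha)).1
  have hA' : A.image (· - 1) ⊆ range m := by
    intro i hi
    obtain ⟨a, ha, rfl⟩ := mem_image.1 hi
    have := mem_Icc.1 (hA ha)
    exact mem_range.2 (by omega)
  have hcard : #(A.image (· - 1)) = #A :=
    card_image_of_injOn fun a ha b hb hab => by
      have := hpos a ha; have := hpos b hb; omega
  obtain ⟨i, hi⟩ := inter_nonempty_of_card_lt_card_add_card hA' hB (by rw [card_range, hcard]; omega)
  obtain ⟨a, ha, rfl⟩ := mem_image.1 (mem_inter.1 hi).1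
  exact ⟨a - 1, by rwa [Nat.sub_add_cancel (hpos a ha)], (mem_inter.1 hi).2⟩

theorem List.Nodup.length_eq_card {α : Type*} [Fintype α] {l : List α} (hnd : l.Nodup)
    (hmem : ∀ a, a ∈ l) : l.length = Fintype.card α := by
  classical
  rw [← List.toFinset_card_of_nodup hnd, ← Finset.card_univ]
  exact congrArg _ (Finset.eq_univ_of_forall (by simpa using hmem))

theorem List.exists_eq_map_some {α : Type*} {l : List (Option α)} (h : none ∉ l) :
    ∃ l' : List α, l = l'.map some := by
  induction l with
  | nil => exact ⟨[], rfl⟩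
  | cons a l ih =>
    obtain ⟨a, rfl⟩ := Option.ne_none_iff_exists'.1 fun ha => h (ha ▸ List.mem_cons_self)
    obtain ⟨l', rfl⟩ := ih fun hl => h (List.mem_cons_of_mem _ hl)
    exact ⟨a :: l', rfl⟩

theorem Cycle.exists_eq_cons_of_mem {α : Type*} {c : Cycle α} {a : α} (h : a ∈ c) :
    ∃ l : List α, c = (a :: l : List α) := by
  induction c using Quotient.inductionOn' with
  | h l =>
    obtain ⟨s, t, rfl⟩ := List.append_of_mem (Cycle.mem_coe_iff.1 h)
    exact ⟨t ++ s, Cycle.coe_eq_coe.2 List.isRotated_append⟩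

theorem Cycle.chain_coe_cons_iff {α : Type*} {R : α → α → Prop} {b s e : α} {l : List α}
    (hs : l.head? = some s) (he : l.getLast? = some e) :
    Cycle.Chain R (b :: l : List α) ↔ R b s ∧ l.IsChain R ∧ R e b := by
  rw [Cycle.chain_coe_cons, List.isChain_cons, List.isChain_append]
  simp [List.head?_append, hs, he]

namespace SimpleGraph

variable {V : Type*} {G : SimpleGraph V}

theorem cycleChain_append_reverse {p q : List V} {a b c d : V}
    (hpq : (p ++ q).IsChain G.Adj) (hpa : p.head? = some a) (hpb : p.getLast? = some b)
    (hqc : q.head? = some c) (hqd : q.getLast? = some d) (hbd : G.Adj b d) (hca : G.Adj c a) :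
    Cycle.Chain G.Adj (p ++ q.reverse : List V) := by
  obtain _ | ⟨a', p⟩ := p
  · simp at hpa
  obtain _ | ⟨c', q⟩ := q
  · simp at hqc
  simp only [List.head?_cons, Option.some.injEq] at hpa hqc
  subst hpa hqc
  rw [List.cons_append, Cycle.chain_ne_nil _ (List.cons_ne_nil _ _), List.getLast_cons
    (by simp), List.getLast_append_of_ne_nil _ (by simp),
    List.getLast_reverse, ← List.cons_append, ← List.cons_append, List.isChain_append]
  rw [List.isChain_append] at hpq
  refine ⟨List.isChain_cons_cons.2 ⟨hca, hpq.1⟩,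
    List.isChain_reverse.2 (hpq.2.1.imp fun _ _ h => h.symm), ?_⟩
  intro x hx y hy
  rw [List.getLast?_cons_cons] at hx
  rw [List.head?_reverse] at hy
  simp_all

theorem isChain_of_isChain_sup_edge {l : List V} {a b : V}
    (hl : l.IsChain (G ⊔ edge a b).Adj) (hb : b ∉ l) : l.IsChain G.Adj :=
  hl.imp_of_mem_imp fun x y hx hy h => by
    rw [sup_adj, edge_adj] at h
    aesop

theorem adj_of_sup_edge_adj {a b w : V} (h : (G ⊔ edge a b).Adj b w) (hw : w ≠ a) :
    G.Adj b w := by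
  rw [sup_adj, edge_adj] at h
  aesop

theorem Walk.head?_support {u v : V} (p : G.Walk u v) : p.support.head? = some u := by
  rw [← p.cons_tail_support]; rfl

theorem Walk.getLast?_support {u v : V} (p : G.Walk u v) : p.support.getLast? = some v := by
  rw [List.getLast?_eq_some_getLast p.support_ne_nil, Walk.getLast_support]

theorem Walk.IsHamiltonian.reverse [DecidableEq V] {u v : V} {p : G.Walk u v}
    (hp : p.IsHamiltonian) : p.reverse.IsHamiltonian := fun a => by
  simpa [Walk.support_reverse, List.count_reverse] using hp a

theorem exists_walk_isHamiltonian_of_isChain [DecidableEq V] {l : List V} {u v : V}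
    (hnd : l.Nodup) (hmem : ∀ w, w ∈ l) (hl : l.IsChain G.Adj) (hu : l.head? = some u)
    (hv : l.getLast? = some v) : ∃ p : G.Walk u v, p.IsHamiltonian := by
  have hne : l ≠ [] := List.ne_nil_of_mem (hmem u)
  have hu' : l.head hne = u := by simpa [List.head?_eq_some_head hne] using hu
  have hv' : l.getLast hne = v := by simpa [List.getLast?_eq_some_getLast hne] using hv
  refine ⟨(Walk.ofSupport l hne hl).copy hu' hv', ?_⟩
  refine Walk.IsPath.isHamiltonian_of_mem ?_ fun w => ?_ <;>
    simp only [Walk.isPath_def, Walk.support_copy, Walk.support_ofSupport, hnd, hmem]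

variable (G) in
/-- A Hamiltonian cycle presented as a cyclic order of all vertices. Unlike
`Walk.IsHamiltonianCycle`, it admits the cycle `[a, b]` formed by a single edge. -/
def IsHamCycle (c : Cycle V) : Prop :=
  c.Nodup ∧ (∀ v, v ∈ c) ∧ c.Chain G.Adj

theorem IsHamCycle.mono {H : SimpleGraph V} {c : Cycle V} (hc : G.IsHamCycle c) (hGH : G ≤ H) :
    H.IsHamCycle c :=
  ⟨hc.1, hc.2.1, hc.2.2.imp fun _ _ h => hGH h⟩

theorem IsHamCycle.exists_eq_cons [Fintype V] {c : Cycle V} (hc : G.IsHamCycle c)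
    (h3 : 3 ≤ Fintype.card V) (b : V) :
    ∃ l s e, c = (b :: l : List V) ∧ l.head? = some s ∧ l.getLast? = some e ∧ s ≠ e := by
  obtain ⟨hnd, hmem, -⟩ := hc
  obtain ⟨l, rfl⟩ := Cycle.exists_eq_cons_of_mem (hmem b)
  rw [Cycle.nodup_coe_iff] at hnd
  have hlen : (b :: l).length = Fintype.card V :=
    hnd.length_eq_card fun v => Cycle.mem_coe_iff.1 (hmem v)
  obtain _ | ⟨s, l⟩ := l
  · simp at hlen; omega
  obtain rfl | ⟨t, e, rfl⟩ := l.eq_nil_or_concat'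
  · simp at hlen; omega
  refine ⟨s :: (t ++ [e]), s, e, rfl, rfl, by simp [List.getLast?_cons], fun h => ?_⟩
  subst h; simp at hnd

theorem Walk.IsHamiltonian.exists_crossover [Fintype V] [DecidableEq V] [DecidableRel G.Adj]
    {u v : V} {p : G.Walk u v} (hp : p.IsHamiltonian)
    (hdeg : Fintype.card V ≤ G.degree u + G.degree v) :
    ∃ i w₀ w₁, p.support[i]? = some w₀ ∧ p.support[i + 1]? = some w₁ ∧
      G.Adj w₀ v ∧ G.Adj w₁ u := by
  set l := p.support
  have hlen : l.length = Fintype.card V := hp.length_support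
  have hmem : ∀ w, w ∈ l := hp.mem_support
  have hget : ∀ w, l[l.idxOf w]? = some w := fun w => List.getElem?_idxOf (hmem w)
  have hidx : ∀ w, l.idxOf w < Fintype.card V := fun w =>
    hlen ▸ List.idxOf_lt_length_iff.2 (hmem w)
  have hidx_u : ∀ w, l.idxOf w = 0 → w = u := fun w hw => by
    simpa [hw, ← List.head?_eq_getElem?, l, p.head?_support] using (hget w).symm
  have hidx_v : ∀ w, l.idxOf w = Fintype.card V - 1 → w = v := fun w hw => by
    simpa [hw, ← hlen, ← List.getLast?_eq_getElem?, l, p.getLast?_support] using (hget w).symm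
  have hcard : ∀ x, #((G.neighborFinset x).image l.idxOf) = G.degree x := fun x => by
    rw [card_image_of_injOn fun w _ w' _ h => (List.idxOf_inj (hmem w)).1 h,
      card_neighborFinset_eq_degree]
  obtain ⟨i, hi₁, hi₀⟩ := exists_succ_mem_and_mem_of_card_lt
    (A := (G.neighborFinset u).image l.idxOf) (B := (G.neighborFinset v).image l.idxOf)
    (m := Fintype.card V - 1)
    (fun k hk => by
      obtain ⟨w, hw, rfl⟩ := mem_image.1 hk
      have := hidx w
      have : l.idxOf w ≠ 0 := fun h =>
        G.ne_of_adj ((mem_neighborFinset ..).1 hw) (hidx_u w h).symm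
      exact mem_Icc.2 ⟨by omega, by omega⟩)
    (fun k hk => by
      obtain ⟨w, hw, rfl⟩ := mem_image.1 hk
      have := hidx w
      have : l.idxOf w ≠ Fintype.card V - 1 := fun h =>
        G.ne_of_adj ((mem_neighborFinset ..).1 hw) (hidx_v w h).symm
      exact mem_range.2 (by omega))
    (by have := Fintype.card_pos_iff.2 ⟨u⟩; rw [hcard, hcard]; omega)
  obtain ⟨w₁, hw₁, hi₁⟩ := mem_image.1 hi₁
  obtain ⟨w₀, hw₀, hi₀⟩ := mem_image.1 hi₀
  exact ⟨i, w₀, w₁, hi₀ ▸ hget w₀, hi₁ ▸ hget w₁, ((mem_neighborFinset ..).1 hw₀).symm,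
    ((mem_neighborFinset ..).1 hw₁).symm⟩

theorem Walk.IsHamiltonian.exists_isHamCycle [Fintype V] [DecidableEq V] [DecidableRel G.Adj]
    {u v : V} {p : G.Walk u v} (hp : p.IsHamiltonian)
    (hdeg : Fintype.card V ≤ G.degree u + G.degree v) : ∃ c, G.IsHamCycle c := by
  obtain ⟨i, w₀, w₁, h₀, h₁, hw₀, hw₁⟩ := hp.exists_crossover hdeg
  set l := p.support
  have hi : i + 1 < l.length := (List.getElem?_eq_some_iff.1 h₁).1
  have hperm : (l.take (i + 1) ++ (l.drop (i + 1)).reverse).Perm l :=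
    ((List.perm_append_left_iff _).2 (List.reverse_perm _)).trans
      (List.Perm.of_eq (List.take_append_drop _ _))
  refine ⟨(l.take (i + 1) ++ (l.drop (i + 1)).reverse : List V),
    Cycle.nodup_coe_iff.2 (hperm.nodup_iff.2 hp.isPath.support_nodup),
    fun w => Cycle.mem_coe_iff.2 (hperm.mem_iff.2 (hp.mem_support w)), ?_⟩
  refine cycleChain_append_reverse (by rw [List.take_append_drop]; exact p.isChain_adj_support)
    (by rw [List.head?_take, if_neg (by omega), p.head?_support])
    (by rw [List.getLast?_take]; simp [h₀]) (by rw [List.head?_drop, h₁])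
    (by rw [List.getLast?_drop, if_neg (by omega), p.getLast?_support]) hw₀ hw₁

theorem IsHamCycle.exists_of_sup_edge [Fintype V] [DecidableEq V] [DecidableRel G.Adj]
    {a b : V} {c : Cycle V} (hc : (G ⊔ edge a b).IsHamCycle c) (h3 : 3 ≤ Fintype.card V)
    (hdeg : Fintype.card V ≤ G.degree a + G.degree b) : ∃ c, G.IsHamCycle c := by
  obtain ⟨l, s, e, rfl, hs, he, hse⟩ := hc.exists_eq_cons h3 b
  obtain ⟨hnd, hmem, hch⟩ := hc
  rw [Cycle.nodup_coe_iff] at hnd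
  simp only [Cycle.mem_coe_iff] at hmem
  obtain ⟨hbs, hl, heb⟩ := (Cycle.chain_coe_cons_iff hs he).1 hch
  replace hl := isChain_of_isChain_sup_edge hl (List.nodup_cons.1 hnd).1
  have hdeg' : Fintype.card V ≤ G.degree b + G.degree a := by omega
  by_cases hea : e = a
  · obtain ⟨p, hp⟩ := exists_walk_isHamiltonian_of_isChain (u := b) (v := a) hnd hmem
      (List.isChain_cons.2 ⟨by simpa [hs] using adj_of_sup_edge_adj hbs (hea ▸ hse), hl⟩) rfl
      (by simp [List.getLast?_cons, he, hea])
    exact hp.exists_isHamCycle hdeg'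
  by_cases hsa : s = a
  · obtain ⟨p, hp⟩ := exists_walk_isHamiltonian_of_isChain (u := b) (v := a) (l := b :: l.reverse)
      (by rwa [List.nodup_cons, List.nodup_reverse, List.mem_reverse, ← List.nodup_cons])
      (fun w => by rw [List.mem_cons, List.mem_reverse, ← List.mem_cons]; exact hmem w)
      (List.isChain_cons.2 ⟨by simpa [List.head?_reverse, he] using
        (adj_of_sup_edge_adj heb.symm hea), List.isChain_reverse.2 (hl.imp fun _ _ h => h.symm)⟩)
      rfl (by simp [List.getLast?_cons, List.getLast?_reverse, hs, hsa])
    exact hp.exists_isHamCycle hdeg'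
  exact ⟨(b :: l : List V), Cycle.nodup_coe_iff.2 hnd, fun v => Cycle.mem_coe_iff.2 (hmem v),
    (Cycle.chain_coe_cons_iff hs he).2
      ⟨adj_of_sup_edge_adj hbs hsa, hl, (adj_of_sup_edge_adj heb.symm hea).symm⟩⟩

theorem exists_isHamCycle_of_le [Fintype V] [DecidableEq V] [DecidableRel G.Adj]
    {H : SimpleGraph V} {c : Cycle V} (hGH : G ≤ H) (hc : H.IsHamCycle c)
    (h3 : 3 ≤ Fintype.card V)
    (hdeg : ∀ a b, H.Adj a b → ¬G.Adj a b → Fintype.card V ≤ G.degree a + G.degree b) :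
    ∃ c, G.IsHamCycle c := by
  classical
  induction H using WellFoundedLT.induction generalizing c with
  | _ H ih =>
  by_cases hHG : H ≤ G
  · exact ⟨c, hc.mono hHG⟩
  obtain ⟨a, b, hab, hnab⟩ : ∃ a b, H.Adj a b ∧ ¬G.Adj a b := by
    simpa [SimpleGraph.le_iff_adj] using hHG
  set H' := H.deleteEdges {s(a, b)}
  have hH'H : H' < H := lt_of_le_of_ne (deleteEdges_le _) fun h => by
    have := (h ▸ hab : H'.Adj a b); simp [H'] at this
  have hGH' : G ≤ H' := fun x y hxy => by
    refine deleteEdges_adj.2 ⟨hGH hxy, fun hs => hnab ?_⟩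
    rcases Sym2.eq_iff.1 (Set.mem_singleton_iff.1 hs) with ⟨rfl, rfl⟩ | ⟨rfl, rfl⟩
    exacts [hxy, hxy.symm]
  have hHH' : H ≤ H' ⊔ edge a b := fun x y hxy => by
    by_cases hs : s(x, y) = s(a, b)
    · exact Or.inr ((edge_adj ..).2 ⟨Sym2.eq_iff.1 hs, hxy.ne⟩)
    · exact Or.inl (deleteEdges_adj.2 ⟨hxy, hs⟩)
  obtain ⟨c', hc'⟩ := (hc.mono hHH').exists_of_sup_edge h3
    ((hdeg a b hab hnab).trans (add_le_add (degree_le_of_le hGH') (degree_le_of_le hGH')))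
  exact ih H' hH'H hGH' hc' fun x y hxy => hdeg x y (deleteEdges_le _ hxy)

variable (G) in
def addVertex (x y : V) : SimpleGraph (Option V) where
  Adj
    | some u, some v => G.Adj u v
    | some u, none | none, some u => u = x ∨ u = y
    | none, none => False
  symm := ⟨by rintro (_ | u) (_ | v) h <;> first | exact h | exact G.symm.symm _ _ h⟩
  loopless := ⟨by rintro (_ | u) h; exacts [h, G.loopless.irrefl u h]⟩

theorem addVertex_mono {G' : SimpleGraph V} (h : G ≤ G') (x y : V) :
    G.addVertex x y ≤ G'.addVertex x y := by
  rintro (_ | u) (_ | v) huv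
  exacts [huv, huv, huv, h huv]

theorem degree_le_degree_addVertex [Fintype V] [DecidableRel G.Adj] (x y u : V)
    [Fintype ((G.addVertex x y).neighborSet (some u))] :
    G.degree u ≤ (G.addVertex x y).degree (some u) := by
  rw [← card_neighborFinset_eq_degree, ← card_neighborFinset_eq_degree]
  exact card_le_card_of_injOn some
    (fun w hw => (mem_neighborFinset _ _ _).2 ((mem_neighborFinset G u w).1 hw))
    (Option.some_injective _).injOn

theorem exists_isHamCycle_top_addVertex [Fintype V] [DecidableEq V] {x y : V} (hxy : x ≠ y) :
    ∃ c, ((⊤ : SimpleGraph V).addVertex x y).IsHamCycle c := by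
  set l := x :: (((univ.erase x).erase y).toList ++ [y])
  have hnd : l.Nodup := by
    simp +contextual [l, hxy, List.nodup_append, Finset.nodup_toList]
  refine ⟨(none :: l.map some : List (Option V)), ?_, ?_, ?_⟩
  · simpa [Cycle.nodup_coe_iff] using hnd.map (Option.some_injective V)
  · rintro (_ | v) <;> simp [l]
    tauto
  · refine (Cycle.chain_coe_cons_iff (s := some x) (e := some y) (by simp [l])
      (by simp [l, List.getLast?_cons])).2 ⟨Or.inl rfl, ?_, Or.inr rfl⟩
    exact List.isChain_map _ |>.2 hnd.isChain

theorem IsHamCycle.exists_walk_of_addVertex [Fintype V] [DecidableEq V] {x y : V}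
    {c : Cycle (Option V)} (hc : (G.addVertex x y).IsHamCycle c)
    (h3 : 3 ≤ Fintype.card (Option V)) : ∃ p : G.Walk x y, p.IsHamiltonian := by
  obtain ⟨l, _ | s, _ | e, rfl, hs, he, hse⟩ := hc.exists_eq_cons h3 none <;>
    obtain ⟨hnd, hmem, hch⟩ := hc <;>
    obtain ⟨hs', hl, he'⟩ := (Cycle.chain_coe_cons_iff hs he).1 hch
  · exact hs'.elim
  · exact hs'.elim
  · exact he'.elim
  rw [Cycle.nodup_coe_iff, List.nodup_cons] at hnd
  obtain ⟨l, rfl⟩ := List.exists_eq_map_some hnd.1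
  have hl' : l.IsChain G.Adj := (List.isChain_map some).1 hl
  have hnd' : l.Nodup := hnd.2.of_map some
  have hmem' : ∀ v, v ∈ l := fun v => by simpa using Cycle.mem_coe_iff.1 (hmem (some v))
  simp only [List.head?_map, List.getLast?_map, Option.map_eq_some_iff, Option.some_inj,
    exists_eq_right] at hs he
  rcases hs' with rfl | rfl <;> rcases he' with rfl | rfl
  · exact absurd rfl hse
  · exact exists_walk_isHamiltonian_of_isChain hnd' hmem' hl' hs he
  · obtain ⟨p, hp⟩ := exists_walk_isHamiltonian_of_isChain hnd' hmem' hl' hs he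
    exact ⟨p.reverse, hp.reverse⟩
  · exact absurd rfl hse

theorem exists_isHamiltonian_of_card_succ_le_degree_add_degree [Fintype V] [DecidableEq V]
    [DecidableRel G.Adj]
    (hG : ∀ u v, u ≠ v → ¬G.Adj u v → Fintype.card V + 1 ≤ G.degree u + G.degree v)
    {x y : V} (hxy : x ≠ y) : ∃ p : G.Walk x y, p.IsHamiltonian := by
  classical
  have h3 : 3 ≤ Fintype.card (Option V) := by
    have := Fintype.one_lt_card_iff.2 ⟨x, y, hxy⟩
    rw [Fintype.card_option]; omega
  have hdeg : ∀ a b, ((⊤ : SimpleGraph V).addVertex x y).Adj a b →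
      ¬(G.addVertex x y).Adj a b →
      Fintype.card (Option V) ≤ (G.addVertex x y).degree a + (G.addVertex x y).degree b := by
    rintro (_ | u) (_ | v) huv hnuv
    · exact huv.elim
    · exact (hnuv huv).elim
    · exact (hnuv huv).elim
    · have := G.degree_le_degree_addVertex x y u
      have := G.degree_le_degree_addVertex x y v
      have := hG u v huv hnuv
      rw [Fintype.card_option]
      omega
  obtain ⟨c, hc⟩ := exists_isHamCycle_top_addVertex (V := V) hxy
  obtain ⟨c, hc⟩ := exists_isHamCycle_of_le (addVertex_mono le_top x y) hc h3 hdeg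
  exact hc.exists_walk_of_addVertex h3

end SimpleGraph

theorem ore_hamiltonian_path_connected_general {V : Type*} [Fintype V] [DecidableEq V]
    (G : SimpleGraph V) [DecidableRel G.Adj]
    (hδ : ∀ v : V, Fintype.card V + 1 ≤ 2 * G.degree v) :
    ∀ x y : V, x ≠ y → ∃ p : G.Walk x y, p.IsPath ∧ p.IsHamiltonian := by
  intro x y hxy
  obtain ⟨p, hp⟩ := G.exists_isHamiltonian_of_card_succ_le_degree_add_degree
    (fun u v _ _ => by have := hδ u; have := hδ v; omega) hxy
  exact ⟨p, hp.isPath, hp⟩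

/-- **Ore's theorem.** Every graph on `n ≥ 4` vertices with minimum degree at least
`(n+1)/2` is Hamiltonian path-connected: between any two distinct vertices there is a
Hamiltonian path. -/
theorem ore_hamiltonian_path_connected {V : Type*} [Fintype V] [DecidableEq V]
    (G : SimpleGraph V) [DecidableRel G.Adj]
    (hn : 4 ≤ Fintype.card V)
    (hδ : ∀ v : V, Fintype.card V + 1 ≤ 2 * G.degree v) :
    ∀ x y : V, x ≠ y → ∃ p : G.Walk x y, p.IsPath ∧ p.IsHamiltonian :=
  ore_hamiltonian_path_connected_general G hδ
end

section
/- For every ε > 0 there is a constant C₀ such that for all C ≥ C₀ and n ≥ 2: if G is a graph on N = C·n·(n-1) vertices with minimum degree δ(G) ≥ (1+ε)·N/2, then G contains a spanning subdivision of the complete graph K_n. -/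
/-- `IsSpanningSubdivisionWith G H f` says that `G` contains a spanning subdivision of `H`
whose branch vertices are given by the injective map `f`: for every edge `ij` of `H` there
is a path in `G` from `f i` to `f j`, these paths are pairwise internally disjoint, their
interiors avoid all branch vertices, and together they cover every vertex of `G`. -/
def IsSpanningSubdivisionWith {V W : Type*} (G : SimpleGraph V) (H : SimpleGraph W)
    (f : W → V) : Prop :=
  Function.Injective f ∧
  ∃ P : ∀ i j : W, H.Adj i j → G.Walk (f i) (f j),
    (∀ i j (h : H.Adj i j), (P i j h).IsPath) ∧
    (∀ i j (h : H.Adj i j), P j i h.symm = (P i j h).reverse) ∧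
    (∀ i j k l (h : H.Adj i j) (h' : H.Adj k l), s(i, j) ≠ s(k, l) →
      ∀ x, x ∈ (P i j h).support → x ∈ (P k l h').support →
        (x = f i ∨ x = f j) ∧ (x = f k ∨ x = f l)) ∧
    (∀ i j (h : H.Adj i j) (k : W), f k ∈ (P i j h).support → k = i ∨ k = j) ∧
    (∀ x : V, (∃ i j, ∃ h : H.Adj i j, x ∈ (P i j h).support) ∨ ∃ i, x = f i)

/-- `G` contains a spanning subdivision of `H`. -/
def IsSpanningSubdivisionIn {V W : Type*} (G : SimpleGraph V) (H : SimpleGraph W) : Prop :=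
  ∃ f : W → V, IsSpanningSubdivisionWith G H f

/-!
For `C ≥ 8/ε` the excess `εN = εCn(n-1)` is at least `4n²`, so `2δ(G) ≥ N + 4n²`. Fix arbitrary
branch vertices `b 0, …, b (n-1)`; any two of them have at least `4n²` common neighbours, so by
Hall's theorem every edge `ij ≠ 01` of `Kₙ` can be subdivided once by a private common neighbour
`m ij` that is not a branch vertex. Removing these midpoints and the branch vertices other than
`b 0`, `b 1` deletes at most `n² + n` vertices, so the remaining graph still has `2δ ≥ |V| + 2`.
There a Hamiltonian cycle of the graph minus `b 0`, `b 1` (Dirac) can be opened at an edge whose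
ends are neighbours of `b 0` and `b 1` respectively, giving a Hamiltonian `b 0`–`b 1` path; it
serves as the subdivided edge `01` and absorbs every vertex left.
-/

open Finset

namespace SimpleGraph.Walk

variable {V : Type*} {G : SimpleGraph V}

lemma exists_eq_append_cons_of_mem_darts {u v : V} (p : G.Walk u v) {d : G.Dart}
    (hd : d ∈ p.darts) :
    ∃ (p₁ : G.Walk u d.fst) (p₂ : G.Walk d.snd v), p = p₁.append (cons d.adj p₂) := by
  induction p with
  | nil => simp at hd
  | cons h q ih =>
    rcases List.mem_cons.mp hd with rfl | hd
    · exact ⟨nil, q, rfl⟩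
    · obtain ⟨p₁, p₂, rfl⟩ := ih hd
      exact ⟨cons h p₁, p₂, rfl⟩

lemma exists_perm_support_tail_of_mem_darts {u : V} (c : G.Walk u u) {d : G.Dart}
    (hd : d ∈ c.darts) : ∃ r : G.Walk d.snd d.fst, r.support.Perm c.support.tail := by
  obtain ⟨c₁, c₂, rfl⟩ := c.exists_eq_append_cons_of_mem_darts hd
  refine ⟨c₂.append c₁, ?_⟩
  rw [support_append, support_append, support_cons, List.tail_cons, ← c₁.cons_tail_support]
  simpa using List.perm_append_comm

lemma IsPath.exists_isPath_perm_support_of_mem_darts {a b : V} {p : G.Walk a b} (hp : p.IsPath)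
    {d : G.Dart} (hd : d ∈ p.darts) (hb : G.Adj b d.fst) :
    ∃ q : G.Walk a d.snd, q.IsPath ∧ q.support.Perm p.support := by
  obtain ⟨p₁, p₂, rfl⟩ := p.exists_eq_append_cons_of_mem_darts hd
  have hperm : (p₁.append (cons hb.symm p₂.reverse)).support.Perm
      (p₁.append (cons d.adj p₂)).support := by
    simpa [support_append] using (List.reverse_perm p₂.support).append_left p₁.support
  exact ⟨_, (isPath_def _).mpr (hperm.nodup_iff.mpr hp.support_nodup), hperm⟩

lemma exists_mem_darts_adj_adj [DecidableEq V] [DecidableRel G.Adj] {u v : V} (p : G.Walk u v)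
    (hp : p.darts.Nodup) (a b : V)
    (h : p.length < #{x ∈ p.support.tail.toFinset | G.Adj a x} +
      #{x ∈ p.support.dropLast.toFinset | G.Adj b x}) :
    ∃ d ∈ p.darts, G.Adj a d.snd ∧ G.Adj b d.fst := by
  set D := p.darts.toFinset
  have hD : #D = p.length := by rw [List.toFinset_card_of_nodup hp, length_darts]
  have hA : #{x ∈ p.support.tail.toFinset | G.Adj a x} ≤ #{d ∈ D | G.Adj a d.snd} :=
    (card_le_card fun x => by simp [D, ← map_snd_darts]; grind).trans (card_image_le (f := (·.snd)))
  have hB : #{x ∈ p.support.dropLast.toFinset | G.Adj b x} ≤ #{d ∈ D | G.Adj b d.fst} :=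
    (card_le_card fun x => by simp [D, ← map_fst_darts]; grind).trans (card_image_le (f := (·.fst)))
  obtain ⟨d, hd⟩ := inter_nonempty_of_card_lt_card_add_card
    (filter_subset (fun d => G.Adj a d.snd) D) (filter_subset (fun d => G.Adj b d.fst) D) (by omega)
  simp only [mem_inter, mem_filter, D, List.mem_toFinset] at hd
  exact ⟨d, hd.1.1, hd.1.2, hd.2.2⟩

lemma IsPath.exists_isPath_length_eq_succ {a z y w : V} {q : G.Walk a z} (hq : q.IsPath)
    (hza : G.Adj z a) (hy : y ∈ q.support) (hw : w ∉ q.support) (hyw : G.Adj y w) :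
    ∃ (x : V) (r : G.Walk w x), r.IsPath ∧ r.length = q.length + 1 := by
  obtain ⟨d, hd, rfl⟩ :=
    List.mem_map.mp (by rwa [map_snd_darts] : y ∈ (cons hza q).darts.map (·.snd))
  obtain ⟨r, hr⟩ := (cons hza q).exists_perm_support_tail_of_mem_darts hd
  rw [support_cons, List.tail_cons] at hr
  refine ⟨d.fst, cons hyw.symm r, (isPath_def _).mpr ?_, ?_⟩
  · exact (hr.nodup_iff.mpr hq.support_nodup).cons fun h => hw (hr.mem_iff.mp h)
  · simpa using hr.length_eq

lemma IsPath.mem_support_of_adj_of_length_maximal {a b w : V} {p : G.Walk a b} (hp : p.IsPath)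
    (hmax : ∀ (x y : V) (q : G.Walk x y), q.IsPath → q.length ≤ p.length) (haw : G.Adj a w) :
    w ∈ p.support := by
  by_contra hw
  simpa using hmax _ _ _ (hp.cons hw (h := haw.symm))

lemma IsHamiltonian.mem_support_map_induce_iff [DecidableEq V] {s : Set V} {u v : s}
    {q : (G.induce s).Walk u v} (hq : q.IsHamiltonian) (x : V) :
    x ∈ (q.map (Embedding.induce s).toHom).support ↔ x ∈ s := by
  simp only [support_map, List.mem_map]
  exact ⟨by rintro ⟨y, -, rfl⟩; exact y.2, fun hx => ⟨⟨x, hx⟩, hq.mem_support _, rfl⟩⟩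

lemma exists_isHamiltonian_of_mem_support_tail_iff [Fintype V] [DecidableEq V]
    [DecidableRel G.Adj] {u a b : V} (c : G.Walk u u) (hc : c.support.tail.Nodup)
    (hmem : ∀ x, x ∈ c.support.tail ↔ x ≠ a ∧ x ≠ b) (hab : a ≠ b)
    (hdeg : c.length + 2 < G.degree a + G.degree b) : ∃ p : G.Walk a b, p.IsHamiltonian := by
  have hA : G.degree a - 1 ≤ #{x ∈ c.support.tail.toFinset | G.Adj a x} := by
    rw [← card_neighborFinset_eq_degree]
    refine (pred_card_le_card_erase (a := b)).trans (card_le_card fun x hx => ?_)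
    rw [mem_erase, mem_neighborFinset] at hx
    simpa [hmem, hx.2, hx.1] using (G.ne_of_adj hx.2).symm
  have hB : G.degree b - 1 ≤ #{x ∈ c.support.dropLast.toFinset | G.Adj b x} := by
    rw [← card_neighborFinset_eq_degree]
    refine (pred_card_le_card_erase (a := a)).trans (card_le_card fun x hx => ?_)
    rw [mem_erase, mem_neighborFinset] at hx
    simpa [← c.tail_support_perm_dropLast_support.mem_iff, hmem, hx.2, hx.1] using
      (G.ne_of_adj hx.2).symm
  obtain ⟨d, hd, had, hbd⟩ := c.exists_mem_darts_adj_adj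
    (.of_map (·.snd) (by rwa [map_snd_darts])) a b (by omega)
  obtain ⟨r, hr⟩ := c.exists_perm_support_tail_of_mem_darts hd
  let p := cons had (r.concat hbd.symm)
  have hp : p.support.Perm (a :: b :: c.support.tail) := by
    simpa [p, support_concat] using (List.perm_append_singleton b r.support).trans (hr.cons b)
  refine ⟨p, (IsPath.isHamiltonian_of_mem ((isPath_def _).mpr (hp.nodup_iff.mpr ?_))) fun x => ?_⟩
  · simp [hc, hmem, hab]
  · rw [hp.mem_iff]
    by_cases hxa : x = a
    · simp [hxa]
    · by_cases hxb : x = b <;> simp [hxa, hxb, hmem]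

end SimpleGraph.Walk

namespace SimpleGraph

variable {V : Type*} {G : SimpleGraph V}

open Walk

lemma exists_isPath_forall_length_le [Fintype V] [Nonempty V] (G : SimpleGraph V) :
    ∃ (a b : V) (p : G.Walk a b), p.IsPath ∧
      ∀ (x y : V) (q : G.Walk x y), q.IsPath → q.length ≤ p.length := by
  classical
  let P : ℕ → Prop := fun k => ∃ (a b : V) (p : G.Walk a b), p.IsPath ∧ p.length = k
  have hP : ∀ k, P k → k ≤ Fintype.card V := by
    rintro k ⟨a, b, p, hp, rfl⟩
    exact hp.length_lt.le
  obtain ⟨a, b, p, hp, hlen⟩ := Nat.findGreatest_spec (P := P) (Nat.zero_le _)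
    ⟨Classical.arbitrary V, _, nil, IsPath.nil, rfl⟩
  exact ⟨a, b, p, hp, fun x y q hq => hlen ▸ Nat.le_findGreatest (hP _ ⟨x, y, q, hq, rfl⟩)
    ⟨x, y, q, hq, rfl⟩⟩

lemma degree_add_degree_le_card_add_card_inter [Fintype V] [DecidableEq V] [DecidableRel G.Adj]
    (u v : V) :
    G.degree u + G.degree v ≤ Fintype.card V + #(G.neighborFinset u ∩ G.neighborFinset v) := by
  rw [← card_neighborFinset_eq_degree, ← card_neighborFinset_eq_degree,
    ← card_union_add_card_inter]
  gcongr
  exact card_le_univ _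

lemma exists_adj_mem_notMem [Fintype V] [DecidableEq V] [DecidableRel G.Adj] {S : Set V}
    {a w : V} (ha : a ∈ S) (hw : w ∉ S) (hdeg : Fintype.card V ≤ G.degree a + G.degree w) :
    ∃ y ∈ S, ∃ x ∉ S, G.Adj y x := by
  by_cases haw : G.Adj a w
  · exact ⟨a, ha, w, hw, haw⟩
  have hne : a ≠ w := by rintro rfl; exact hw ha
  have hsub : ∀ {u v}, G.Adj u v → u = a ∨ u = w → v ∈ ({a, w}ᶜ : Finset V) := by
    rintro u v huv (rfl | rfl) <;> simp only [mem_compl, mem_insert, mem_singleton, not_or]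
    · exact ⟨(G.ne_of_adj huv).symm, fun h => haw (h ▸ huv)⟩
    · exact ⟨fun h => haw (h ▸ huv.symm), (G.ne_of_adj huv).symm⟩
  have hcard : 2 ≤ Fintype.card V := by
    simpa [card_pair hne] using card_le_univ ({a, w} : Finset V)
  obtain ⟨z, hz⟩ := inter_nonempty_of_card_lt_card_add_card
    (s := {a, w}ᶜ) (t := G.neighborFinset a) (u := G.neighborFinset w)
    (fun v hv => hsub ((mem_neighborFinset ..).mp hv) (.inl rfl))
    (fun v hv => hsub ((mem_neighborFinset ..).mp hv) (.inr rfl))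
    (by rw [card_compl, card_pair hne, card_neighborFinset_eq_degree,
      card_neighborFinset_eq_degree]; omega)
  rw [mem_inter, mem_neighborFinset, mem_neighborFinset] at hz
  by_cases hzS : z ∈ S
  · exact ⟨z, hzS, w, hw, hz.2.symm⟩
  · exact ⟨a, ha, z, hzS, hz.1⟩

theorem exists_isHamiltonian_adj_of_card_le_two_mul_degree [Fintype V] [DecidableEq V]
    [DecidableRel G.Adj] [Nonempty V] (hdeg : ∀ v, Fintype.card V ≤ 2 * G.degree v) :
    ∃ (a z : V) (q : G.Walk a z), q.IsHamiltonian ∧ G.Adj z a := by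
  obtain ⟨a, b, p, hp, hmax⟩ := exists_isPath_forall_length_le G
  have hNa : {x ∈ p.support.tail.toFinset | G.Adj a x} = G.neighborFinset a := by
    ext x
    simp only [mem_filter, List.mem_toFinset, mem_neighborFinset, and_iff_right_iff_imp]
    intro hax
    have := hp.mem_support_of_adj_of_length_maximal hmax hax
    rw [← p.cons_tail_support] at this
    exact (List.mem_cons.mp this).resolve_left (G.ne_of_adj hax).symm
  have hNb : {x ∈ p.support.dropLast.toFinset | G.Adj b x} = G.neighborFinset b := by
    ext x
    simp only [mem_filter, List.mem_toFinset, mem_neighborFinset, and_iff_right_iff_imp]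
    intro hbx
    have := hp.reverse.mem_support_of_adj_of_length_maximal (by simpa using hmax) hbx
    rw [← p.reverse.cons_tail_support, support_reverse, List.tail_reverse] at this
    simpa [(G.ne_of_adj hbx).symm] using this
  obtain ⟨d, hd, had, hbd⟩ := p.exists_mem_darts_adj_adj
    (darts_nodup_of_support_nodup hp.support_nodup) a b (by
      rw [hNa, hNb, card_neighborFinset_eq_degree, card_neighborFinset_eq_degree]
      have := hdeg a; have := hdeg b; have := hp.length_lt; omega)
  obtain ⟨q, hq, hperm⟩ := hp.exists_isPath_perm_support_of_mem_darts hd hbd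
  refine ⟨a, d.snd, q, hq.isHamiltonian_of_mem fun w => ?_, had.symm⟩
  by_contra hw
  obtain ⟨y, hy, x, hx, hyx⟩ := exists_adj_mem_notMem (G := G) (S := {v | v ∈ q.support})
    q.start_mem_support hw (by have := hdeg a; have := hdeg w; omega)
  obtain ⟨_, r, hr, hlen⟩ := hq.exists_isPath_length_eq_succ had.symm hy hx hyx
  have := hmax _ _ r hr
  have : q.length = p.length := by simpa using hperm.length_eq
  omega

lemma degree_le_degree_induce_add [Fintype V] [DecidableEq V] [DecidableRel G.Adj] (s : Set V)
    [DecidablePred (· ∈ s)] (v : s) : G.degree v ≤ (G.induce s).degree v + #s.toFinsetᶜ := by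
  rw [← card_neighborFinset_eq_degree, ← card_neighborFinset_eq_degree,
    ← card_map (.subtype (· ∈ s)), map_neighborFinset_induce, ← card_inter_add_card_sdiff
    (G.neighborFinset v) s.toFinset]
  gcongr
  exact fun x hx => mem_compl.mpr (mem_sdiff.mp hx).2

theorem exists_isHamiltonian_of_card_add_two_le_two_mul_degree [Fintype V] [DecidableEq V]
    [DecidableRel G.Adj] (hdeg : ∀ v, Fintype.card V + 2 ≤ 2 * G.degree v) {a b : V}
    (hab : a ≠ b) : ∃ p : G.Walk a b, p.IsHamiltonian := by
  let s : Set V := {a, b}ᶜ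
  have hsc : s.toFinsetᶜ = {a, b} := by ext; simp [s]
  have hcard : Fintype.card s + 2 = Fintype.card V := by
    rw [← Set.toFinset_card, ← card_pair hab, ← hsc, card_add_card_compl]
  have : Nonempty s := by
    rw [← Fintype.card_pos_iff]
    have := hdeg a
    have := G.degree_lt_card_verts a
    omega
  obtain ⟨u, z, q, hq, hzu⟩ := exists_isHamiltonian_adj_of_card_le_two_mul_degree
    (G := G.induce s) fun v => by
      have := degree_le_degree_induce_add (G := G) s v
      have := hdeg v
      rw [hsc, card_pair hab] at *
      omega
  let ι := Embedding.induce (G := G) s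
  let c := cons (ι.map_adj_iff.mpr hzu) (q.map ι.toHom)
  refine c.exists_isHamiltonian_of_mem_support_tail_iff (hq.isPath.map ι.injective).support_nodup
    (fun x => (hq.mem_support_map_induce_iff x).trans (by simp [s])) hab ?_
  have := hq.length_eq
  have := hdeg a
  have := hdeg b
  simp only [c, length_cons, length_map]
  omega

theorem exists_isPath_mem_support_iff [Fintype V] [DecidableEq V] [DecidableRel G.Adj]
    (s : Set V) [DecidablePred (· ∈ s)]
    (hdeg : ∀ v, Fintype.card V + #s.toFinsetᶜ + 2 ≤ 2 * G.degree v) {a b : V} (ha : a ∈ s)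
    (hb : b ∈ s) (hab : a ≠ b) : ∃ p : G.Walk a b, p.IsPath ∧ ∀ x, x ∈ p.support ↔ x ∈ s := by
  obtain ⟨q, hq⟩ := exists_isHamiltonian_of_card_add_two_le_two_mul_degree (G := G.induce s)
    (a := ⟨a, ha⟩) (b := ⟨b, hb⟩) (fun v => by
      have := degree_le_degree_induce_add (G := G) s v
      have := hdeg v
      have : Fintype.card s + #s.toFinsetᶜ = Fintype.card V := by
        rw [← Set.toFinset_card, card_add_card_compl]
      omega) (by simpa using hab)
  exact ⟨_, hq.isPath.map (Embedding.induce (G := G) s).injective, hq.mem_support_map_induce_iff⟩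

end SimpleGraph

lemma Finset.exists_injective_forall_mem_of_card_le {ι α : Type*} [Fintype ι] [DecidableEq α]
    (t : ι → Finset α) (ht : ∀ i, Fintype.card ι ≤ #(t i)) :
    ∃ f : ι → α, Function.Injective f ∧ ∀ i, f i ∈ t i := by
  refine (all_card_le_biUnion_card_iff_exists_injective t).mp fun s => ?_
  obtain rfl | ⟨i, hi⟩ := s.eq_empty_or_nonempty
  · simp
  · exact (card_le_univ s).trans ((ht i).trans (card_le_card (subset_biUnion_of_mem t hi)))

lemma isSpanningSubdivisionWith_of_interior {V W : Type*} {G : SimpleGraph V}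
    {H : SimpleGraph W} {f : W → V} (hf : Function.Injective f) (I : Sym2 W → Set V)
    (P : ∀ i j, H.Adj i j → G.Walk (f i) (f j)) (hpath : ∀ i j h, (P i j h).IsPath)
    (hrev : ∀ i j h, P j i h.symm = (P i j h).reverse)
    (hsupp : ∀ i j h, ∀ x ∈ (P i j h).support, x = f i ∨ x = f j ∨ x ∈ I s(i, j))
    (hI : ∀ e, Disjoint (I e) (Set.range f))
    (hdisj : ∀ e ∈ H.edgeSet, ∀ e' ∈ H.edgeSet, e ≠ e' → Disjoint (I e) (I e'))
    (hcover : ∀ x, (∃ i j, ∃ h : H.Adj i j, x ∈ (P i j h).support) ∨ ∃ i, x = f i) :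
    IsSpanningSubdivisionWith G H f := by
  have hnotI : ∀ i j k l (h : H.Adj i j) (h' : H.Adj k l), s(i, j) ≠ s(k, l) →
      ∀ x ∈ (P k l h').support, x ∉ I s(i, j) := by
    intro i j k l h h' hne x hx hxI
    have hxf : x ∉ Set.range f := Set.disjoint_left.mp (hI _) hxI
    rcases hsupp k l h' x hx with rfl | rfl | hxI'
    · exact hxf ⟨k, rfl⟩
    · exact hxf ⟨l, rfl⟩
    · exact Set.disjoint_left.mp (hdisj _ h _ h' hne) hxI hxI'
  refine ⟨hf, P, hpath, hrev, fun i j k l h h' hne x hx hx' => ?_, fun i j h k hk => ?_, hcover⟩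
  · have := hsupp i j h x hx
    have := hsupp k l h' x hx'
    have := hnotI i j k l h h' hne x hx'
    have := hnotI k l i j h' h hne.symm x hx
    tauto
  · rcases hsupp i j h _ hk with hk | hk | hk
    · exact .inl (hf hk)
    · exact .inr (hf hk)
    · exact absurd ⟨k, rfl⟩ (Set.disjoint_left.mp (hI _) hk)

namespace SimpleGraph

section Midpoints

variable {V W : Type*} {G : SimpleGraph V}

lemma exists_injective_adj_notMem_range [Fintype V] [DecidableEq V] [DecidableRel G.Adj]
    [Fintype W] (b : W → V)
    (hdeg : ∀ v, Fintype.card V + Fintype.card (Sym2 W) + Fintype.card W ≤ 2 * G.degree v) :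
    ∃ m : Sym2 W → V, Function.Injective m ∧ (∀ e, ∀ k ∈ e, G.Adj (b k) (m e)) ∧
      ∀ e, m e ∉ Set.range b := by
  classical
  obtain ⟨m, hm, hmt⟩ := exists_injective_forall_mem_of_card_le
    (fun e => {x | (∀ k ∈ e, G.Adj (b k) x) ∧ x ∉ Set.range b}) fun e => by
      induction e using Sym2.ind with | _ i j => ?_
      have hsub : (G.neighborFinset (b i) ∩ G.neighborFinset (b j)) \ univ.image b ⊆
          ({x | (∀ k ∈ s(i, j), G.Adj (b k) x) ∧ x ∉ Set.range b} : Finset V) := fun x => by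
        simp
      have := card_le_card hsub
      have := le_card_sdiff (univ.image b) (G.neighborFinset (b i) ∩ G.neighborFinset (b j))
      have : #(univ.image b) ≤ Fintype.card W := card_image_le
      have := degree_add_degree_le_card_add_card_inter (G := G) (b i) (b j)
      have := hdeg (b i)
      have := hdeg (b j)
      omega
  have hmt e := (mem_filter.mp (hmt e)).2
  exact ⟨m, hm, fun e => (hmt e).1, fun e => (hmt e).2⟩

end Midpoints

section CliqueSubdivision

variable {V W : Type*} [DecidableEq W] {G : SimpleGraph V} {b : W → V} {m : Sym2 W → V}
  {i₀ i₁ : W}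

def cliquePath (hm : ∀ e, ∀ k ∈ e, G.Adj (b k) (m e)) (Q : G.Walk (b i₀) (b i₁)) (i j : W) :
    G.Walk (b i) (b j) :=
  if h : i = i₀ ∧ j = i₁ then Q.copy (congrArg b h.1.symm) (congrArg b h.2.symm)
  else if h' : i = i₁ ∧ j = i₀ then Q.reverse.copy (congrArg b h'.1.symm) (congrArg b h'.2.symm)
  else .cons (hm s(i, j) i (Sym2.mem_mk_left i j))
    (.cons (hm s(i, j) j (Sym2.mem_mk_right i j)).symm .nil)

section
variable (hm : ∀ e, ∀ k ∈ e, G.Adj (b k) (m e)) (Q : G.Walk (b i₀) (b i₁))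

lemma support_cliquePath (i j : W) : (cliquePath hm Q i j).support =
    if i = i₀ ∧ j = i₁ then Q.support
    else if i = i₁ ∧ j = i₀ then Q.support.reverse else [b i, m s(i, j), b j] := by
  unfold cliquePath
  split_ifs <;> simp

lemma cliquePath_swap (h₀₁ : i₀ ≠ i₁) (i j : W) :
    cliquePath hm Q j i = (cliquePath hm Q i j).reverse := by
  refine Walk.ext_support ?_
  rw [Walk.support_reverse, support_cliquePath, support_cliquePath]
  split_ifs <;> simp_all [Sym2.eq_swap]

lemma isPath_cliquePath (hQ : Q.IsPath) (hb : Function.Injective b)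
    (hmb : ∀ e, m e ∉ Set.range b) {i j : W} (hij : i ≠ j) : (cliquePath hm Q i j).IsPath := by
  rw [Walk.isPath_def, support_cliquePath]
  have hi : b i ≠ m s(i, j) := fun h => hmb _ ⟨i, h⟩
  have hj : b j ≠ m s(i, j) := fun h => hmb _ ⟨j, h⟩
  split_ifs
  · exact hQ.support_nodup
  · exact List.nodup_reverse.mpr hQ.support_nodup
  · simp [hi, hj.symm, hb.ne hij]

end

def leftoverVertices (b : W → V) (m : Sym2 W → V) (e₀ : Sym2 W) : Set V :=
  {x | x ∉ Set.range b ∧ ∀ e, ¬e.IsDiag → e ≠ e₀ → x ≠ m e}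

theorem isSpanningSubdivisionWith_completeGraph (hb : Function.Injective b)
    (hm_inj : Function.Injective m) (hm : ∀ e, ∀ k ∈ e, G.Adj (b k) (m e))
    (hmb : ∀ e, m e ∉ Set.range b) (h₀₁ : i₀ ≠ i₁) {Q : G.Walk (b i₀) (b i₁)} (hQ : Q.IsPath)
    (hQS : ∀ x, x ∈ Q.support ↔ x = b i₀ ∨ x = b i₁ ∨ x ∈ leftoverVertices b m s(i₀, i₁)) :
    IsSpanningSubdivisionWith G (completeGraph W) b := by
  set R := leftoverVertices b m s(i₀, i₁)
  have hne₀ : ∀ {i j}, ¬(i = i₀ ∧ j = i₁) → ¬(i = i₁ ∧ j = i₀) → s(i, j) ≠ s(i₀, i₁) := by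
    intro i j h₁ h₂ h
    rcases Sym2.eq_iff.mp h with h | h <;> tauto
  refine isSpanningSubdivisionWith_of_interior hb (fun e => if e = s(i₀, i₁) then R else {m e})
    (fun i j _ => cliquePath hm Q i j) (fun i j h => isPath_cliquePath hm Q hQ hb hmb h)
    (fun i j _ => cliquePath_swap hm Q h₀₁ i j) (fun i j h x hx => ?_) (fun e => ?_)
    (fun e he e' he' hne => ?_) (fun x => ?_)
  · rw [support_cliquePath] at hx
    split_ifs at hx with h₁ h₂
    · obtain ⟨rfl, rfl⟩ := h₁
      simpa using (hQS x).mp hx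
    · obtain ⟨rfl, rfl⟩ := h₂
      simpa [Sym2.eq_swap, or_left_comm] using (hQS x).mp (List.mem_reverse.mp hx)
    · simp only [hne₀ h₁ h₂, if_false]
      simp at hx
      tauto
  · split_ifs
    · exact Set.disjoint_left.mpr fun x hx => hx.1
    · exact Set.disjoint_singleton_left.mpr (hmb e)
  · simp only [edgeSet_top, Set.mem_compl_iff, Sym2.mem_diagSet] at he he'
    split_ifs with h h'
    · exact absurd (h.trans h'.symm) hne
    · exact Set.disjoint_singleton_right.mpr fun hx => hx.2 e' he' h' rfl
    · exact Set.disjoint_singleton_left.mpr fun hx => hx.2 e he h rfl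
    · exact Set.disjoint_singleton.mpr (hm_inj.ne hne)
  · by_cases hxb : x ∈ Set.range b
    · obtain ⟨i, rfl⟩ := hxb
      exact .inr ⟨i, rfl⟩
    refine .inl ?_
    by_cases hxm : ∃ e, ¬e.IsDiag ∧ e ≠ s(i₀, i₁) ∧ x = m e
    · obtain ⟨e, hd, he, rfl⟩ := hxm
      induction e using Sym2.ind with | _ i j => ?_
      refine ⟨i, j, by simpa using hd, ?_⟩
      rw [support_cliquePath, if_neg (by rintro ⟨rfl, rfl⟩; exact he rfl),
        if_neg (by rintro ⟨rfl, rfl⟩; exact he Sym2.eq_swap)]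
      simp
    · refine ⟨i₀, i₁, h₀₁, ?_⟩
      rw [support_cliquePath, if_pos ⟨rfl, rfl⟩, hQS]
      exact .inr (.inr ⟨hxb, fun e hd he h => hxm ⟨e, hd, he, h⟩⟩)

end CliqueSubdivision

variable {V : Type*} {G : SimpleGraph V}

theorem isSpanningSubdivisionIn_completeGraph [Fintype V] [DecidableEq V] [DecidableRel G.Adj]
    [Nonempty V] {n : ℕ} (hn : 2 ≤ n) (hdeg : ∀ v, Fintype.card V + 4 * n ^ 2 ≤ 2 * G.degree v) :
    IsSpanningSubdivisionIn G (completeGraph (Fin n)) := by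
  have hsym : Fintype.card (Sym2 (Fin n)) ≤ n ^ 2 := by
    simpa [sq] using Fintype.card_le_of_surjective _ (Sym2.mk_surjective (α := Fin n))
  have hn2 : n ≤ n ^ 2 := Nat.le_self_pow two_ne_zero n
  obtain ⟨b⟩ : Nonempty (Fin n ↪ V) := Function.Embedding.nonempty_of_card_le (by
    have := hdeg (Classical.arbitrary V)
    have := G.degree_lt_card_verts (Classical.arbitrary V)
    simp only [Fintype.card_fin]
    omega)
  obtain ⟨m, hm_inj, hm, hmb⟩ := exists_injective_adj_notMem_range (G := G) b fun v => by
    have := hdeg v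
    simp only [Fintype.card_fin]
    omega
  let i₀ : Fin n := ⟨0, by omega⟩
  let i₁ : Fin n := ⟨1, by omega⟩
  have h₀₁ : i₀ ≠ i₁ := by simp [i₀, i₁, Fin.ext_iff]
  classical
  let S : Set V := {x | x = b i₀ ∨ x = b i₁ ∨ x ∈ leftoverVertices b m s(i₀, i₁)}
  have hS : #S.toFinsetᶜ ≤ n ^ 2 + n := by
    calc #S.toFinsetᶜ ≤ #(univ.image m ∪ univ.image b) := card_le_card fun x hx => by
          rw [mem_compl, Set.mem_toFinset] at hx
          simp only [S, leftoverVertices, Set.mem_ofPred_eq] at hx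
          simp only [mem_union, mem_image, mem_univ, true_and]
          by_contra! h
          exact hx (.inr (.inr ⟨fun ⟨i, hi⟩ => h.2 i hi, fun e _ _ he => h.1 e he.symm⟩))
      _ ≤ n ^ 2 + n := (card_union_le _ _).trans (add_le_add (card_image_le.trans hsym)
          (card_image_le.trans (by simp)))
  obtain ⟨Q, hQ, hQS⟩ := exists_isPath_mem_support_iff (G := G) S
    (fun v => by have := hdeg v; omega) (.inl rfl : b i₀ ∈ S) (.inr (.inl rfl))
    (b.injective.ne h₀₁)
  exact ⟨b, isSpanningSubdivisionWith_completeGraph b.injective hm_inj hm hmb h₀₁ hQ hQS⟩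

end SimpleGraph

/-- For every `ε > 0` there is `C₀` such that for all `C ≥ C₀` and `n ≥ 2`, every graph
on `N = C·n·(n-1)` vertices with minimum degree at least `(1+ε)N/2` contains a spanning
subdivision of the complete graph `K_n`. -/
theorem spanning_clique_subdivision :
    ∀ ε : ℝ, 0 < ε → ∃ C₀ : ℕ, 0 < C₀ ∧ ∀ C : ℕ, C₀ ≤ C → ∀ n : ℕ, 2 ≤ n →
      ∀ (V : Type) [Fintype V] (G : SimpleGraph V) [DecidableRel G.Adj],
        Fintype.card V = C * n * (n - 1) →
        (∀ v : V, (1 + ε) * (Fintype.card V : ℝ) / 2 ≤ (G.degree v : ℝ)) →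
        IsSpanningSubdivisionIn G (SimpleGraph.completeGraph (Fin n)) := by
  intro ε hε
  have hC₀ : 0 < ⌈8 / ε⌉₊ := Nat.ceil_pos.mpr (by positivity)
  refine ⟨⌈8 / ε⌉₊, hC₀, fun C hC n hn V _ G _ hcard hdeg => ?_⟩
  classical
  have : Nonempty V := by
    rw [← Fintype.card_pos_iff, hcard]
    exact Nat.mul_pos (Nat.mul_pos (hC₀.trans_le hC) (by omega)) (by omega)
  refine SimpleGraph.isSpanningSubdivisionIn_completeGraph hn fun v => ?_
  have hεC : 8 ≤ C * ε := (div_le_iff₀ hε).mp ((Nat.le_ceil _).trans (by exact_mod_cast hC))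
  have hN : (Fintype.card V : ℝ) = C * (n * (n - 1)) := by
    rw [hcard, Nat.cast_mul, Nat.cast_mul, Nat.cast_sub (by omega), Nat.cast_one]
    ring
  have hn' : (2 : ℝ) ≤ n := by exact_mod_cast hn
  have := hdeg v
  have : (8 : ℝ) * (n * (n - 1)) ≤ C * ε * (n * (n - 1)) := by gcongr; nlinarith
  have : (Fintype.card V : ℝ) + 4 * n ^ 2 ≤ 2 * G.degree v := by nlinarith
  exact_mod_cast this
end

section
/- Let 1/C ≪ δ < α and n ≥ 2. Suppose log n ≤ d < n and G is a graph on N = C·d·n vertices with minimum degree δ(G) ≥ αN. Then for every d-regular graph H on vertex set [n], G admits an (H, α-δ)-good partition, i.e., a partition V(G) = V₁ ∪ ... ∪ V_n into parts of equal size m = Cd such that δ(G[V_i]) ≥ (α-δ)m for all i, and δ(G[V_i, V_j]) ≥ (α-δ)m for every edge ij of H. -/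
/-!
Label the vertices by a uniformly random bijection `V ≃ Fin n × Fin m` and let the `i`-th part be
the set of vertices whose label has first coordinate `i`. Each part is then a uniformly random
`m`-set, so for a vertex `v` with `D ≥ αN` neighbours, the number of neighbours of `v` in a fixed
part is hypergeometric, with weights `C(D, k) C(N - D, m - k)`. These weights grow by a factor
`1 + δ/2` from `k` to `k + 1` as long as `k` stays `δm/2` below the mean `Dm/N ≥ αm`, so at most a
fraction `(m + 1) (1 + δ/2)^(-⌊δm/2⌋)` of the labelings give `v` fewer than `(α - δ)m` neighbours
in that part. A union bound over the `Nn` pairs (vertex, part) leaves a labeling in which every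
vertex has at least `(α - δ)m` neighbours in every part, as soon as
`Nn(m + 1) < (1 + δ/2)^⌊δm/2⌋`; for `m = Cd` and `n ≤ eᵈ` this holds once `C` is large.
-/

open Finset Filter Real
open scoped Nat

lemma choose_mul_choose_sub_le_choose {N D m k : ℕ} (hDN : D ≤ N) (hkm : k ≤ m) :
    D.choose k * (N - D).choose (m - k) ≤ N.choose m := by
  rw [← Nat.add_sub_cancel' hDN, Nat.add_choose_eq, Nat.add_sub_cancel_left]
  exact single_le_sum (f := fun ij : ℕ × ℕ => D.choose ij.1 * (N - D).choose ij.2)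
    (fun _ _ => Nat.zero_le _) (a := (k, m - k)) (mem_antidiagonal.2 (by simp; omega))

lemma one_add_mul_mul_le_mul {N D m k ε : ℝ} (hk : 0 ≤ k) (hkD : k + 1 ≤ D)
    (hkm : k + 1 ≤ m) (hgap : 0 ≤ N - D - m + k + 1) (hε : 0 ≤ ε)
    (h : (k + 1) * N + ε * m * N ≤ D * m) :
    (1 + ε) * ((k + 1) * (N - D - m + k + 1)) ≤ (D - k) * (m - k) := by
  have hprod : (k + 1) * (N - D - m + k + 1) ≤ m * N :=
    mul_le_mul hkm (by linarith) hgap (by linarith)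
  nlinarith [mul_le_mul_of_nonneg_left hprod hε]

lemma one_add_mul_choose_mul_choose_le {N D m k : ℕ} {ε : ℝ} (hmN : m ≤ N)
    (hkm : k < m) (hε : 0 ≤ ε) (h : ((k : ℝ) + 1) * N + ε * m * N ≤ D * m) :
    (1 + ε) * (D.choose k * (N - D).choose (m - k) : ℝ) ≤
      D.choose (k + 1) * (N - D).choose (m - (k + 1)) := by
  obtain ⟨a, rfl⟩ : ∃ a, m = k + 1 + a := ⟨m - (k + 1), by omega⟩
  rw [show k + 1 + a - k = a + 1 by omega, show k + 1 + a - (k + 1) = a by omega]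
  rcases lt_or_ge (N - D) (a + 1) with hlt | hle
  · rw [Nat.choose_eq_zero_of_lt hlt]
    simp only [Nat.cast_zero, mul_zero]
    positivity
  have hN : (0 : ℝ) < N := by exact_mod_cast (show 0 < N by omega)
  have hkD : k + 1 ≤ D := by
    have : ((k : ℝ) + 1) * N ≤ D * N := by
      nlinarith [mul_nonneg (mul_nonneg hε (Nat.cast_nonneg (k + 1 + a))) hN.le,
        (show ((k + 1 + a : ℕ) : ℝ) ≤ N by exact_mod_cast hmN)]
    exact_mod_cast le_of_mul_le_mul_right this hN
  have hD := congrArg (Nat.cast (R := ℝ)) (Nat.choose_succ_right_eq D k)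
  have hND := congrArg (Nat.cast (R := ℝ)) (Nat.choose_succ_right_eq (N - D) a)
  push_cast [Nat.cast_sub (by omega : k ≤ D), Nat.cast_sub (by omega : a ≤ N - D),
    Nat.cast_sub (by omega : D ≤ N)] at hD hND h ⊢
  have hgap : (a : ℝ) + 1 ≤ N - D := by
    have : ((a + 1 : ℕ) : ℝ) ≤ ((N - D : ℕ) : ℝ) := by exact_mod_cast hle
    push_cast [Nat.cast_sub (by omega : D ≤ N)] at this
    exact this
  have hratio := one_add_mul_mul_le_mul (N := N) (D := D) (m := k + 1 + a) (k := k) (ε := ε)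
    (by positivity) (by exact_mod_cast hkD) (by linarith) (by linarith) hε (by linarith)
  have hpos : (0 : ℝ) < (k + 1) * (a + 1) := by positivity
  refine le_of_mul_le_mul_right ?_ hpos
  calc (1 + ε) * ((D.choose k : ℝ) * (N - D).choose (a + 1)) * ((k + 1) * (a + 1))
      = (1 + ε) * ((k + 1) * (N - D - (k + 1 + a) + k + 1)) * (D.choose k * (N - D).choose a) := by
        linear_combination (1 + ε) * (k + 1) * (D.choose k : ℝ) * hND
    _ ≤ (D - k) * (k + 1 + a - k) * (D.choose k * (N - D).choose a) :=
        mul_le_mul_of_nonneg_right hratio (by positivity)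
    _ = D.choose (k + 1) * (N - D).choose a * ((k + 1) * (a + 1)) := by
        linear_combination -(a + 1) * ((N - D).choose a : ℝ) * hD

lemma pow_mul_le_of_mul_le_succ {f : ℕ → ℝ} {c : ℝ} (hc : 0 ≤ c) {k L : ℕ}
    (h : ∀ j, k ≤ j → j < k + L → c * f j ≤ f (j + 1)) : c ^ L * f k ≤ f (k + L) := by
  induction L with
  | zero => simp
  | succ L ih =>
    calc c ^ (L + 1) * f k = c * (c ^ L * f k) := by ring
      _ ≤ c * f (k + L) :=
          mul_le_mul_of_nonneg_left (ih fun j hkj hj => h j hkj (by omega)) hc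
      _ ≤ f (k + (L + 1)) := h (k + L) (by omega) (by omega)

lemma choose_mul_choose_mul_pow_le {N D m k L : ℕ} {ε : ℝ} (hDN : D ≤ N) (hmN : m ≤ N)
    (hε : 0 ≤ ε) (hkL : k + L ≤ m) (h : ((k + L : ℕ) : ℝ) * N + ε * m * N ≤ D * m) :
    (D.choose k * (N - D).choose (m - k) : ℝ) * (1 + ε) ^ L ≤ N.choose m := by
  have hstep : ∀ j, k ≤ j → j < k + L →
      (1 + ε) * (D.choose j * (N - D).choose (m - j) : ℝ) ≤
        D.choose (j + 1) * (N - D).choose (m - (j + 1)) := by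
    intro j _ hj
    refine one_add_mul_choose_mul_choose_le hmN (by omega) hε (le_trans ?_ h)
    have : (j : ℝ) + 1 ≤ ((k + L : ℕ) : ℝ) := by exact_mod_cast hj
    gcongr
  calc (D.choose k * (N - D).choose (m - k) : ℝ) * (1 + ε) ^ L
      = (1 + ε) ^ L * (D.choose k * (N - D).choose (m - k) : ℝ) := mul_comm _ _
    _ ≤ D.choose (k + L) * (N - D).choose (m - (k + L)) :=
        pow_mul_le_of_mul_le_succ (f := fun j => (D.choose j * (N - D).choose (m - j) : ℝ))
          (by linarith) hstep
    _ ≤ N.choose m := by exact_mod_cast choose_mul_choose_sub_le_choose hDN hkL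

lemma card_filter_card_inter_eq_le {V : Type*} [Fintype V] [DecidableEq V] (A : Finset V)
    (m k : ℕ) :
    #{S ∈ powersetCard m (univ : Finset V) | #(S ∩ A) = k} ≤
      (#A).choose k * (Fintype.card V - #A).choose (m - k) := by
  calc #{S ∈ powersetCard m (univ : Finset V) | #(S ∩ A) = k}
      ≤ #(powersetCard k A ×ˢ powersetCard (m - k) Aᶜ) := by
        refine card_le_card_of_injOn (fun S => (S ∩ A, S \ A)) ?_ ?_
        · intro S hS
          simp only [coe_filter, mem_powersetCard, subset_univ, true_and, Set.mem_ofPred_eq] at hS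
          have := card_inter_add_card_sdiff S A
          simp only [coe_product, Set.mem_prod, mem_coe, mem_powersetCard]
          exact ⟨⟨inter_subset_right, hS.2⟩, fun x hx => mem_compl.2 (mem_sdiff.1 hx).2,
            by omega⟩
        · intro S _ T _ hST
          simp only [Prod.mk.injEq] at hST
          rw [← sdiff_union_inter S A, ← sdiff_union_inter T A, hST.1, hST.2]
    _ = (#A).choose k * (Fintype.card V - #A).choose (m - k) := by
        rw [card_product, card_powersetCard, card_powersetCard, card_compl]

lemma choose_mul_choose_mul_pow_floor_le {N D m k : ℕ} {α δ : ℝ} (hδ : 0 < δ)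
    (hDN : D ≤ N) (hmN : m ≤ N) (hD : α * N ≤ D) (hk : (k : ℝ) < (α - δ) * m) :
    (D.choose k * (N - D).choose (m - k) : ℝ) * (1 + δ / 2) ^ ⌊δ * m / 2⌋₊ ≤
      N.choose m := by
  set L := ⌊δ * m / 2⌋₊
  have hL : (L : ℝ) ≤ δ * m / 2 := Nat.floor_le (by positivity)
  have hm : (0 : ℝ) < m := Nat.cast_pos.2 <| Nat.pos_of_ne_zero fun h0 => by
    simp only [h0, Nat.cast_zero, mul_zero] at hk
    exact (Nat.cast_nonneg k).not_gt hk
  have hmN' : (m : ℝ) ≤ N := by exact_mod_cast hmN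
  have hα : α ≤ 1 := by
    have : α * N ≤ 1 * N := by linarith [(show (D : ℝ) ≤ N by exact_mod_cast hDN)]
    exact le_of_mul_le_mul_right this (by linarith)
  have hkL : ((k + L : ℕ) : ℝ) < (α - δ / 2) * m := by push_cast; linarith
  refine choose_mul_choose_mul_pow_le hDN hmN (by positivity) ?_ ?_
  · have : ((k + L : ℕ) : ℝ) < m := by nlinarith
    exact_mod_cast this.le
  · nlinarith [mul_le_mul_of_nonneg_right hkL.le (by linarith : (0 : ℝ) ≤ N)]

lemma card_filter_card_inter_lt_mul_pow_le {V : Type*} [Fintype V] [DecidableEq V]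
    (A : Finset V) {m : ℕ} {α δ : ℝ} (hδ : 0 < δ) (hmN : m ≤ Fintype.card V)
    (hA : α * Fintype.card V ≤ #A) :
    (#{S ∈ powersetCard m (univ : Finset V) | (#(S ∩ A) : ℝ) < (α - δ) * m} : ℝ) *
      (1 + δ / 2) ^ ⌊δ * m / 2⌋₊ ≤ (m + 1) * (Fintype.card V).choose m := by
  have hq : 0 ≤ (1 + δ / 2) ^ ⌊δ * m / 2⌋₊ := by positivity
  set q := (1 + δ / 2) ^ ⌊δ * m / 2⌋₊
  set N := Fintype.card V
  set bad := {S ∈ powersetCard m (univ : Finset V) | (#(S ∩ A) : ℝ) < (α - δ) * m}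
  set T := {k ∈ range (m + 1) | ((k : ℕ) : ℝ) < (α - δ) * m}
  have hfib : #bad = ∑ k ∈ T, #{S ∈ bad | #(S ∩ A) = k} := by
    refine card_eq_sum_card_fiberwise fun S hS => ?_
    simp only [bad, coe_filter, mem_powersetCard, subset_univ, true_and,
      Set.mem_ofPred_eq] at hS
    simp only [T, coe_filter, mem_range, Set.mem_ofPred_eq]
    exact ⟨Nat.lt_succ_of_le (hS.1 ▸ card_le_card inter_subset_left), hS.2⟩
  have hterm : ∀ k ∈ T, (#{S ∈ bad | #(S ∩ A) = k} : ℝ) * q ≤ N.choose m := by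
    intro k hk
    have hsub : {S ∈ bad | #(S ∩ A) = k} ⊆
        {S ∈ powersetCard m (univ : Finset V) | #(S ∩ A) = k} :=
      fun S hS => by simp only [bad, mem_filter] at hS ⊢; exact ⟨hS.1.1, hS.2⟩
    have hcount : (#{S ∈ bad | #(S ∩ A) = k} : ℝ) ≤
        (#A).choose k * (N - #A).choose (m - k) := by
      exact_mod_cast (card_le_card hsub).trans (card_filter_card_inter_eq_le A m k)
    calc _ ≤ ((#A).choose k * (N - #A).choose (m - k) : ℝ) * q :=
          mul_le_mul_of_nonneg_right hcount hq
      _ ≤ N.choose m := choose_mul_choose_mul_pow_floor_le hδ (card_le_univ A) hmN hA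
          (mem_filter.1 hk).2
  have hT : (#T : ℝ) ≤ m + 1 := by
    exact_mod_cast (card_filter_le _ _).trans (card_range (m + 1)).le
  calc (#bad : ℝ) * q = ∑ k ∈ T, (#{S ∈ bad | #(S ∩ A) = k} : ℝ) * q := by
        rw [hfib, Nat.cast_sum, sum_mul]
    _ ≤ ∑ _k ∈ T, (N.choose m : ℝ) := sum_le_sum hterm
    _ ≤ (m + 1) * N.choose m := by
        rw [sum_const, nsmul_eq_mul]
        exact mul_le_mul_of_nonneg_right hT (by positivity)

lemma card_filter_forall_mem_iff_le {V W : Type*} [Fintype V] [DecidableEq V] [Fintype W]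
    [DecidableEq W] (S : Finset V) (B : Finset W) :
    #{e : V ≃ W | ∀ v, v ∈ S ↔ e v ∈ B} ≤ (#S)! * (Fintype.card V - #S)! := by
  rw [← Fintype.card_subtype]
  let split (e : {e : V ≃ W // ∀ v, v ∈ S ↔ e v ∈ B}) :
      ({v // v ∈ S} ≃ {w // w ∈ B}) × ({v // v ∉ S} ≃ {w // w ∉ B}) :=
    (e.1.subtypeEquiv e.2, e.1.subtypeEquiv fun v => not_congr (e.2 v))
  have hsplit : Function.Injective split := by
    intro e e' h
    simp only [split, Prod.mk.injEq] at h
    refine Subtype.ext (Equiv.ext fun v => ?_)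
    by_cases hv : v ∈ S
    · exact congrArg Subtype.val (DFunLike.congr_fun h.1 ⟨v, hv⟩)
    · exact congrArg Subtype.val (DFunLike.congr_fun h.2 ⟨v, hv⟩)
  rcases isEmpty_or_nonempty {e : V ≃ W // ∀ v, v ∈ S ↔ e v ∈ B} with _ | ⟨⟨e₀⟩⟩
  · simp
  calc _ ≤ _ := Fintype.card_le_of_injective split hsplit
    _ = (#S)! * (Fintype.card V - #S)! := by
      rw [Fintype.card_prod, Fintype.card_equiv (split e₀).1, Fintype.card_equiv (split e₀).2,
        Fintype.card_coe, Fintype.card_subtype_compl, Fintype.card_coe]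

lemma card_filter_card_inter_lt_mul_pow_le_factorial {V W : Type*} [Fintype V]
    [DecidableEq V] [Fintype W] [DecidableEq W] (A : Finset V) (B : Finset W) {α δ : ℝ}
    (hδ : 0 < δ) (hBV : #B ≤ Fintype.card V) (hA : α * Fintype.card V ≤ #A) :
    (#{e : V ≃ W | (#(({v | e v ∈ B} : Finset V) ∩ A) : ℝ) < (α - δ) * #B} : ℝ) *
      (1 + δ / 2) ^ ⌊δ * #B / 2⌋₊ ≤ (#B + 1) * (Fintype.card V)! := by
  have hq : 0 ≤ (1 + δ / 2) ^ ⌊δ * #B / 2⌋₊ := by positivity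
  set q := (1 + δ / 2) ^ ⌊δ * #B / 2⌋₊
  set m := #B
  set N := Fintype.card V
  set bad := {S ∈ powersetCard m (univ : Finset V) | (#(S ∩ A) : ℝ) < (α - δ) * m}
  have hcount : #{e : V ≃ W | (#(({v | e v ∈ B} : Finset V) ∩ A) : ℝ) < (α - δ) * m} ≤
      #bad * (m ! * (N - m)!) := by
    rw [card_eq_sum_card_fiberwise (f := fun e => ({v | e v ∈ B} : Finset V)) (t := bad)]
    · refine (sum_le_sum (g := fun _ => m ! * (N - m)!) fun S hS => ?_).trans
        (by rw [sum_const, smul_eq_mul])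
      have hS : #S = m := (mem_powersetCard.1 (mem_filter.1 hS).1).2
      rw [← hS]
      refine (card_le_card fun e he => ?_).trans (card_filter_forall_mem_iff_le S B)
      obtain ⟨-, rfl⟩ := mem_filter.1 he
      simp
    · intro e he
      simp only [coe_filter, mem_univ, true_and, Set.mem_ofPred_eq] at he
      simp only [bad, coe_filter, mem_powersetCard, subset_univ, true_and, Set.mem_ofPred_eq]
      exact ⟨(card_equiv e fun v => by simp).trans rfl, he⟩
  have hsets := card_filter_card_inter_lt_mul_pow_le A hδ hBV hA
  have hfact : (N.choose m : ℝ) * (m ! * (N - m)! : ℕ) = N ! := by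
    exact_mod_cast (mul_assoc _ _ _).symm.trans (Nat.choose_mul_factorial_mul_factorial hBV)
  calc _ ≤ ((#bad * (m ! * (N - m)!) : ℕ) : ℝ) * q :=
        mul_le_mul_of_nonneg_right (by exact_mod_cast hcount) hq
    _ = (#bad : ℝ) * q * (m ! * (N - m)! : ℕ) := by push_cast; ring
    _ ≤ (m + 1) * N.choose m * (m ! * (N - m)! : ℕ) :=
        mul_le_mul_of_nonneg_right hsets (by positivity)
    _ = (m + 1) * N ! := by rw [mul_assoc, hfact]

lemma eventually_two_mul_log_add_one_add_lt (c : ℝ) {κ : ℝ} (hκ : 0 < κ) :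
    ∀ᶠ x : ℝ in atTop, 2 * log (x + 1) + c < κ * x := by
  have hlog : ∀ᶠ x : ℝ in atTop, ‖log (x + 1)‖ ≤ κ / 4 * ‖x + 1‖ :=
    tendsto_atTop_add_const_right _ 1 tendsto_id |>.eventually
      (isLittleO_log_id_atTop.bound (by positivity : 0 < κ / 4))
  filter_upwards [hlog, eventually_gt_atTop (1 + 2 * c / κ), eventually_ge_atTop 0]
    with x hx hxc hx0
  rw [norm_eq_abs, norm_eq_abs, abs_of_nonneg (by linarith : 0 ≤ x + 1)] at hx
  have : κ / 2 + c < κ / 2 * x := by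
    have := mul_lt_mul_of_pos_left hxc (by positivity : 0 < κ / 2)
    field_simp at this ⊢
    linarith
  linarith [le_abs_self (log (x + 1))]

lemma eventually_mul_lt_pow_floor {δ : ℝ} (hδ : 0 < δ) :
    ∀ᶠ C : ℝ in atTop, ∀ m n : ℕ, 2 ≤ n → C * log n ≤ m →
      (m * n * n * (m + 1) : ℝ) < (1 + δ / 2) ^ ⌊δ * m / 2⌋₊ := by
  set c := log (1 + δ / 2)
  have hc : 0 < c := log_pos (by linarith)
  obtain ⟨X, hX⟩ := eventually_atTop.1
    (eventually_two_mul_log_add_one_add_lt c (by positivity : 0 < c * δ / 4))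
  have hlog2 : 0 < log 2 := log_pos one_lt_two
  filter_upwards [eventually_ge_atTop (8 / (c * δ)), eventually_ge_atTop (X / log 2)]
    with C hC hCX m n hn hm
  have hn0 : (0 : ℝ) < n := by positivity
  have hCpos : 0 < C := lt_of_lt_of_le (by positivity) hC
  have hlogn : log n ≤ m / C := by rw [le_div_iff₀ hCpos]; linarith
  have hmX : X ≤ m := by
    have : log 2 ≤ log n := log_le_log two_pos (by exact_mod_cast hn)
    rw [div_le_iff₀ hlog2] at hCX
    nlinarith
  have hmC : 2 * (m / C) ≤ c * δ / 4 * m := by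
    rw [div_le_iff₀ (by positivity)] at hC
    rw [← mul_div_assoc, div_le_iff₀ hCpos]
    nlinarith [(Nat.cast_nonneg m : (0 : ℝ) ≤ m)]
  have hL : δ * m / 2 - 1 < ⌊δ * m / 2⌋₊ := Nat.sub_one_lt_floor _
  calc (m * n * n * (m + 1) : ℝ) ≤ (m + 1) ^ 2 * n ^ 2 := by nlinarith
    _ = exp (2 * log (m + 1) + 2 * log n) := by
        rw [exp_add, ← log_rpow (by positivity), ← log_rpow hn0, exp_log (by positivity),
          exp_log (by positivity)]
        norm_cast
    _ < exp (c * (δ * m / 2 - 1)) := by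
        rw [exp_lt_exp]
        nlinarith [hX m hmX]
    _ ≤ exp (c * ⌊δ * m / 2⌋₊) := by
        rw [exp_le_exp]
        exact mul_le_mul_of_nonneg_left hL.le hc.le
    _ = (1 + δ / 2) ^ ⌊δ * m / 2⌋₊ := by
        rw [mul_comm, exp_nat_mul, exp_log (by positivity)]

lemma exists_equiv_forall_card_inter_ge {V W ι κ : Type*} [Fintype V] [DecidableEq V]
    [Fintype W] [DecidableEq W] [Fintype ι] [Fintype κ] (e₀ : V ≃ W) (A : κ → Finset V)
    (B : ι → Finset W) {m : ℕ} {α δ : ℝ} (hδ : 0 < δ) (hB : ∀ i, #(B i) = m)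
    (hmV : m ≤ Fintype.card V) (hA : ∀ j, α * Fintype.card V ≤ #(A j))
    (hcount : (Fintype.card κ * Fintype.card ι * (m + 1) : ℝ) <
      (1 + δ / 2) ^ ⌊δ * m / 2⌋₊) :
    ∃ e : V ≃ W, ∀ j i, (α - δ) * m ≤ #(({v | e v ∈ B i} : Finset V) ∩ A j) := by
  by_contra! h
  set q := (1 + δ / 2) ^ ⌊δ * m / 2⌋₊
  set N := Fintype.card V
  set bad : κ × ι → Finset (V ≃ W) := fun p =>
    {e | (#(({v | e v ∈ B p.2} : Finset V) ∩ A p.1) : ℝ) < (α - δ) * m}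
  have hcover : (univ : Finset (V ≃ W)) ⊆ univ.biUnion bad := fun e _ => by
    obtain ⟨j, i, hji⟩ := h e
    exact mem_biUnion.2 ⟨(j, i), mem_univ _, mem_filter.2 ⟨mem_univ _, hji⟩⟩
  have hbad : ∀ p, (#(bad p) : ℝ) * q ≤ (m + 1) * N ! := fun p => by
    simpa only [hB] using card_filter_card_inter_lt_mul_pow_le_factorial (A p.1) (B p.2) hδ
      (hB p.2 ▸ hmV) (hA p.1)
  refine lt_irrefl ((N ! : ℝ) * q) ?_
  calc (N ! : ℝ) * q = #(univ : Finset (V ≃ W)) * q := by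
        rw [card_univ, Fintype.card_equiv e₀]
    _ ≤ (∑ p, (#(bad p) : ℝ)) * q := by
        gcongr
        exact_mod_cast (card_le_card hcover).trans card_biUnion_le
    _ ≤ ∑ _p : κ × ι, (m + 1) * (N ! : ℝ) := by
        rw [sum_mul]
        exact sum_le_sum fun p _ => hbad p
    _ = Fintype.card κ * Fintype.card ι * (m + 1) * N ! := by
        rw [sum_const, card_univ, Fintype.card_prod, nsmul_eq_mul]
        push_cast
        ring
    _ < q * N ! := mul_lt_mul_of_pos_right hcount (by positivity)
    _ = N ! * q := mul_comm _ _

lemma SimpleGraph.exists_equipartition_forall_card_inter_neighborFinset_ge {V : Type*}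
    [Fintype V] [DecidableEq V] (G : SimpleGraph V) [DecidableRel G.Adj] {m n : ℕ} {α δ : ℝ}
    (hδ : 0 < δ) (hn : 0 < n) (hV : Fintype.card V = m * n)
    (hdeg : ∀ v, α * Fintype.card V ≤ G.degree v)
    (hcount : (Fintype.card V * n * (m + 1) : ℝ) < (1 + δ / 2) ^ ⌊δ * m / 2⌋₊) :
    ∃ P : Fin n → Finset V, (∀ i j, i ≠ j → Disjoint (P i) (P j)) ∧
      univ.biUnion P = univ ∧ (∀ i, #(P i) = m) ∧
      ∀ i v, (α - δ) * m ≤ #(P i ∩ G.neighborFinset v) := by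
  obtain ⟨e₀⟩ : Nonempty (V ≃ Fin n × Fin m) := Fintype.card_eq.1 (by simp [hV, mul_comm])
  have hB : ∀ i : Fin n, #({i} ×ˢ (univ : Finset (Fin m))) = m := by simp
  obtain ⟨e, he⟩ := exists_equiv_forall_card_inter_ge e₀ (fun v => G.neighborFinset v)
    (fun i => {i} ×ˢ univ) hδ hB (by rw [hV]; exact Nat.le_mul_of_pos_right m hn)
    (fun v => by rw [card_neighborFinset_eq_degree]; exact hdeg v) (by simpa using hcount)
  refine ⟨fun i => {v | e v ∈ {i} ×ˢ univ}, fun i j hij => ?_, ?_, fun i => ?_,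
    fun i v => he v i⟩
  · refine disjoint_filter.2 fun v _ hi hj => hij ?_
    simp only [mem_product, mem_singleton, mem_univ, and_true] at hi hj
    exact hi.symm.trans hj
  · exact eq_univ_of_forall fun v => mem_biUnion.2 ⟨(e v).1, mem_univ _, by simp⟩
  · exact (card_equiv e fun v => by simp).trans (hB i)

theorem good_partition_exists_general (δ α : ℝ) (hδ : 0 < δ) :
    ∃ C₀ : ℕ, 0 < C₀ ∧ ∀ C : ℕ, C₀ ≤ C → ∀ n : ℕ, 2 ≤ n →
      ∀ d : ℕ, Real.log n ≤ (d : ℝ) → d < n →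
      ∀ (V : Type) [Fintype V] [DecidableEq V] (G : SimpleGraph V) [DecidableRel G.Adj],
        Fintype.card V = C * d * n →
        (∀ v : V, α * (Fintype.card V : ℝ) ≤ (G.degree v : ℝ)) →
        ∀ (H : SimpleGraph (Fin n)) [DecidableRel H.Adj], H.IsRegularOfDegree d →
          ∃ P : Fin n → Finset V,
            (∀ i j, i ≠ j → Disjoint (P i) (P j)) ∧
            (Finset.univ.biUnion P = Finset.univ) ∧
            (∀ i, (P i).card = C * d) ∧
            (∀ i, ∀ v ∈ P i, (α - δ) * (C * d : ℝ) ≤ ((P i ∩ G.neighborFinset v).card : ℝ)) ∧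
            (∀ i j, H.Adj i j → ∀ v ∈ P i,
              (α - δ) * (C * d : ℝ) ≤ ((P j ∩ G.neighborFinset v).card : ℝ)) := by
  obtain ⟨C₀, hC₀⟩ :=
    eventually_atTop.1 (tendsto_natCast_atTop_atTop.eventually (eventually_mul_lt_pow_floor hδ))
  refine ⟨C₀ + 1, C₀.succ_pos, fun C hC n hn d hlog _ V _ _ G _ hV hdeg H _ _ => ?_⟩
  have hcount := hC₀ C (by omega) (C * d) n hn (by push_cast; gcongr)
  obtain ⟨P, hdisj, hcover, hcard, hmin⟩ :=
    G.exists_equipartition_forall_card_inter_neighborFinset_ge hδ (by omega) hV hdeg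
      (by rw [hV]; push_cast at hcount ⊢; linarith)
  refine ⟨P, hdisj, hcover, hcard, fun i v _ => ?_, fun i j _ v _ => ?_⟩ <;>
    exact_mod_cast hmin _ v

/-- **Good partition lemma.** For `1/C ≪ δ < α` and `n ≥ 2`: if `log n ≤ d < n` and `G`
is a graph on `N = C·d·n` vertices with minimum degree at least `αN`, then for every
`d`-regular graph `H` on vertex set `[n]` there is a partition of `V(G)` into `n` parts
`V₁, …, V_n` of equal size `m = C·d` with `δ(G[Vᵢ]) ≥ (α-δ)m` for all `i`, and
`δ(G[Vᵢ, Vⱼ]) ≥ (α-δ)m` for all edges `ij` of `H`. -/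
theorem good_partition_exists (δ α : ℝ) (hδ : 0 < δ) (hδα : δ < α) :
    ∃ C₀ : ℕ, 0 < C₀ ∧ ∀ C : ℕ, C₀ ≤ C → ∀ n : ℕ, 2 ≤ n →
      ∀ d : ℕ, Real.log n ≤ (d : ℝ) → d < n →
      ∀ (V : Type) [Fintype V] [DecidableEq V] (G : SimpleGraph V) [DecidableRel G.Adj],
        Fintype.card V = C * d * n →
        (∀ v : V, α * (Fintype.card V : ℝ) ≤ (G.degree v : ℝ)) →
        ∀ (H : SimpleGraph (Fin n)) [DecidableRel H.Adj], H.IsRegularOfDegree d →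
          ∃ P : Fin n → Finset V,
            (∀ i j, i ≠ j → Disjoint (P i) (P j)) ∧
            (Finset.univ.biUnion P = Finset.univ) ∧
            (∀ i, (P i).card = C * d) ∧
            (∀ i, ∀ v ∈ P i, (α - δ) * (C * d : ℝ) ≤ ((P i ∩ G.neighborFinset v).card : ℝ)) ∧
            (∀ i j, H.Adj i j → ∀ v ∈ P i,
              (α - δ) * (C * d : ℝ) ≤ ((P j ∩ G.neighborFinset v).card : ℝ)) :=
  good_partition_exists_general δ α hδ
end
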